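/- arXiv:1109.0345 — 2 statements merged into one kernel-verified Lean document; each statement's English description precedes it below -/
import Mathlib

section
/- There exist infinitely many pairwise non-isomorphic connected graphs that admit no Lombardi drawing. -/
open Set

noncomputable section

/-- A `Piece` is a parameterized circular arc or line segment in the plane `ℂ`. -/
inductive Piece : Type
  | arc (c : ℂ) (r θ₀ θ₁ : ℝ) : Piece
  | seg (p q : ℂ) : Piece

namespace Piece

/-- The parameterization of a piece over `[0,1]`. -/
def toFun : Piece → ℝ → ℂ
  | arc c r θ₀ θ₁, t => c + (r : ℂ) * Complex.exp (Complex.I * ((θ₀ + t * (θ₁ - θ₀) : ℝ) : ℂ))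
  | seg p q, t => p + (t : ℂ) * (q - p)

/-- Nondegeneracy: the parameterization has nonvanishing velocity. -/
def Nondeg : Piece → Prop
  | arc _ r θ₀ θ₁ => r ≠ 0 ∧ θ₀ ≠ θ₁
  | seg p q => p ≠ q

end Piece

/-- The direction of a vector, as an angle modulo `2π`. -/
def dirAngle (z : ℂ) : Real.Angle := (Complex.arg z : Real.Angle)

/-- `γ`, restricted to `[s,t]`, is an affine reparameterization of a single
nondegenerate circular arc or line segment. -/
def IsArcOn (γ : ℝ → ℂ) (s t : ℝ) : Prop :=
  ∃ P : Piece, P.Nondeg ∧ ∀ u ∈ Set.Icc (0 : ℝ) 1, γ (s + u * (t - s)) = P.toFun u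

/-- The curve `γ : [0,1] → ℂ` consists of at most `k` circular arcs (or segments). -/
def PolyArc (k : ℕ) (γ : ℝ → ℂ) : Prop :=
  ∃ m : ℕ, 0 < m ∧ m ≤ k ∧ ∃ f : ℕ → ℝ, f 0 = 0 ∧ f m = 1 ∧
    (∀ i < m, f i < f (i + 1)) ∧ ∀ i < m, IsArcOn γ (f i) (f (i + 1))

/-- A drawing of a simple graph in the plane: vertices go to distinct points, each edge is a
simple continuous curve between the points of its endpoints (traversed consistently in both
directions), and no edge passes through a vertex other than its endpoints. -/
structure GraphDrawing (V : Type*) (G : SimpleGraph V) where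
  pos : V → ℂ
  inj : Function.Injective pos
  curve : ∀ ⦃u v : V⦄, G.Adj u v → ℝ → ℂ
  cont : ∀ ⦃u v : V⦄ (h : G.Adj u v), ContinuousOn (curve h) (Set.Icc 0 1)
  source_eq : ∀ ⦃u v : V⦄ (h : G.Adj u v), curve h 0 = pos u
  target_eq : ∀ ⦃u v : V⦄ (h : G.Adj u v), curve h 1 = pos v
  symm : ∀ ⦃u v : V⦄ (h : G.Adj u v) (t : ℝ), curve h.symm t = curve h (1 - t)
  simple : ∀ ⦃u v : V⦄ (h : G.Adj u v), Set.InjOn (curve h) (Set.Icc 0 1)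
  vertexFree : ∀ ⦃u v : V⦄ (h : G.Adj u v) (w : V),
    pos w ∈ curve h '' Set.Icc 0 1 → w = u ∨ w = v

namespace GraphDrawing

variable {V : Type*} {G : SimpleGraph V} (D : GraphDrawing V G)

/-- Every edge of the drawing is drawn with at most `k` circular arcs. -/
def KArc (k : ℕ) : Prop := ∀ ⦃u v : V⦄ (h : G.Adj u v), PolyArc k (D.curve h)

/-- Every edge curve is continuously differentiable with nonvanishing derivative
(no sharp bends). -/
def Smooth : Prop := ∀ ⦃u v : V⦄ (h : G.Adj u v),
  ContDiffOn ℝ 1 (D.curve h) (Set.Icc 0 1) ∧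
    ∀ t ∈ Set.Icc (0 : ℝ) 1, derivWithin (D.curve h) (Set.Icc 0 1) t ≠ 0

/-- Perfect angular resolution: at each vertex `v`, the tangent directions of the incident
edge curves at `v` are equally spaced around `v`. -/
def PerfectRes : Prop := ∀ v : V,
  ∃ (θ : ℝ) (e : {u // G.Adj v u} ≃ Fin (Nat.card {u // G.Adj v u})),
    ∀ (u : V) (h : G.Adj v u), ∃ d : ℂ, d ≠ 0 ∧
      HasDerivWithinAt (D.curve h) d (Set.Icc 0 1) 0 ∧
      dirAngle d =
        ((θ + 2 * Real.pi * ((e ⟨u, h⟩ : Fin _) : ℕ) /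
            (Nat.card {u // G.Adj v u}) : ℝ) : Real.Angle)

/-- The drawing is planar (crossing-free): two distinct edges meet only at
common endpoints. -/
def NonCrossing : Prop := ∀ ⦃u v u' v' : V⦄ (h : G.Adj u v) (h' : G.Adj u' v'),
  s(u, v) ≠ s(u', v') →
    (D.curve h '' Set.Icc 0 1) ∩ (D.curve h' '' Set.Icc 0 1) ⊆
      ({D.pos u, D.pos v} ∩ {D.pos u', D.pos v'} : Set ℂ)

end GraphDrawing

/-- `G` has a Lombardi drawing: a drawing with one circular arc (or segment) per edge and
perfect angular resolution at every vertex. -/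
def HasLombardi (V : Type*) (G : SimpleGraph V) : Prop :=
  ∃ D : GraphDrawing V G, D.KArc 1 ∧ D.PerfectRes

section NonLombardiFamily

variable {N : ℕ}

/-- Relation on `ℕ` encoding `G` together with a pendant path attached at `x`. -/
def bigRel (G : SimpleGraph (Fin N)) (x : Fin N) (m n : ℕ) : Prop :=
  (∃ hm : m < N, ∃ hn : n < N, G.Adj ⟨m, hm⟩ ⟨n, hn⟩) ∨
    ((m = (x : ℕ) ∧ n = N) ∨ (N ≤ m ∧ n = m + 1))

/-- `G` with a pendant path of length `k` attached at `x`, as a graph on `Fin (N + k)`. -/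
def bigG (G : SimpleGraph (Fin N)) (x : Fin N) (k : ℕ) : SimpleGraph (Fin (N + k)) :=
  (SimpleGraph.fromRel (bigRel G x)).comap Fin.val

lemma bigG_adj_iff (G : SimpleGraph (Fin N)) (x : Fin N) (k : ℕ) (a b : Fin (N + k)) :
    (bigG G x k).Adj a b ↔
      (a : ℕ) ≠ (b : ℕ) ∧ (bigRel G x a b ∨ bigRel G x b a) :=
  SimpleGraph.fromRel_adj _ _ _

lemma adj_lift (G : SimpleGraph (Fin N)) (x : Fin N) (k : ℕ) {u v : Fin N}
    (h : G.Adj u v) : (bigG G x k).Adj (Fin.castAdd k u) (Fin.castAdd k v) := by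
  rw [bigG_adj_iff]
  exact ⟨fun he => h.ne (Fin.ext he), Or.inl (Or.inl ⟨u.isLt, v.isLt, h⟩)⟩

lemma adj_back (G : SimpleGraph (Fin N)) (x : Fin N) (k : ℕ) {v : Fin N}
    (hvx : v ≠ x) {w : Fin (N + k)} (h : (bigG G x k).Adj (Fin.castAdd k v) w) :
    ∃ hw : (w : ℕ) < N, G.Adj v ⟨w, hw⟩ := by
  rw [bigG_adj_iff] at h
  simp only [Fin.coe_castAdd] at h
  obtain ⟨hne, h | h⟩ := h <;>
    rcases h with ⟨hm, hn, hadj⟩ | (⟨h1, h2⟩ | ⟨h1, h2⟩)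
  · exact ⟨hn, hadj⟩
  · exact absurd (Fin.ext h1) hvx
  · exact absurd h1 (Nat.not_le.mpr v.isLt)
  · exact ⟨hm, hadj.symm⟩
  · exact absurd h2 (Nat.ne_of_lt v.isLt)
  · exact absurd h2 (by have := v.isLt; omega)

/-- Restriction: a Lombardi drawing of `G` plus a pendant path at a degree-one
vertex `x` yields a Lombardi drawing of `G`. -/
lemma restrict_lombardi (G : SimpleGraph (Fin N)) (x : Fin N)
    (hx : Nat.card {w // G.Adj x w} = 1) (k : ℕ)
    (hL : HasLombardi (Fin (N + k)) (bigG G x k)) : HasLombardi (Fin N) G := by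
  obtain ⟨D, hk1, hres⟩ := hL
  have ιinj : Function.Injective (Fin.castAdd k : Fin N → Fin (N + k)) :=
    by
    intro a b hab
    have h1 := congrArg Fin.val hab
    simp only [Fin.coe_castAdd] at h1
    exact Fin.ext h1
  refine ⟨{ pos := fun v => D.pos (Fin.castAdd k v)
            inj := D.inj.comp ιinj
            curve := fun u v h => D.curve (adj_lift G x k h)
            cont := fun u v h => D.cont (adj_lift G x k h)
            source_eq := fun u v h => D.source_eq (adj_lift G x k h)
            target_eq := fun u v h => D.target_eq (adj_lift G x k h)
            symm := fun u v h t => D.symm (adj_lift G x k h) t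
            simple := fun u v h => D.simple (adj_lift G x k h)
            vertexFree := fun u v h w hw => by
              rcases D.vertexFree (adj_lift G x k h) (Fin.castAdd k w) hw with h1 | h1
              · exact Or.inl (ιinj h1)
              · exact Or.inr (ιinj h1) }, ?_, ?_⟩
  · intro u v h
    exact hk1 (adj_lift G x k h)
  · intro v
    by_cases hvx : v = x
    · have hx' : Nat.card {w // G.Adj v w} = 1 := by rw [hvx]; exact hx
      obtain ⟨hsub, hne⟩ := Nat.card_eq_one_iff_unique.mp hx'
      obtain ⟨a₀⟩ := hne
      obtain ⟨θ₀, eT, hT⟩ := hres (Fin.castAdd k v)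
      obtain ⟨d₀, hd₀, hder₀, hang₀⟩ := hT (Fin.castAdd k a₀.1) (adj_lift G x k a₀.2)
      refine ⟨θ₀ + 2 * Real.pi *
          ((eT ⟨Fin.castAdd k a₀.1, adj_lift G x k a₀.2⟩ : Fin _) : ℕ) /
          (Nat.card {w // (bigG G x k).Adj (Fin.castAdd k v) w}),
        Finite.equivFin _, ?_⟩
      intro u h
      have hu : u = a₀.1 := congrArg Subtype.val (hsub.elim (⟨u, h⟩ : {w // G.Adj v w}) a₀)
      subst hu
      refine ⟨d₀, hd₀, hder₀, ?_⟩
      have hidx : ∀ z : {w // G.Adj v w},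
          ((Finite.equivFin {w // G.Adj v w} z : Fin _) : ℕ) = 0 := by
        intro z
        have := (Finite.equivFin {w // G.Adj v w} z).isLt
        omega
      rw [hang₀]
      congr 1
      rw [hidx, hx']
      push_cast
      ring
    · obtain ⟨θ₀, eT, hT⟩ := hres (Fin.castAdd k v)
      have φbij : Function.Bijective
          (fun s : {u // G.Adj v u} =>
            (⟨Fin.castAdd k s.1, adj_lift G x k s.2⟩ :
              {w // (bigG G x k).Adj (Fin.castAdd k v) w})) := by
        constructor
        · intro a b hab
          exact Subtype.ext (ιinj (congrArg Subtype.val hab))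
        · rintro ⟨w, hw⟩
          obtain ⟨hwN, hadj⟩ := adj_back G x k hvx hw
          refine ⟨⟨⟨(w : ℕ), hwN⟩, hadj⟩, ?_⟩
          exact Subtype.ext (Fin.ext rfl)
      let φ := Equiv.ofBijective _ φbij
      have hcard : Nat.card {u // G.Adj v u} =
          Nat.card {w // (bigG G x k).Adj (Fin.castAdd k v) w} := Nat.card_congr φ
      refine ⟨θ₀, (φ.trans eT).trans (finCongr hcard.symm), ?_⟩
      intro u h
      obtain ⟨d, hd, hder, hang⟩ := hT (Fin.castAdd k u) (adj_lift G x k h)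
      refine ⟨d, hd, hder, ?_⟩
      rw [hang]
      congr 1
      have hidx : ((((φ.trans eT).trans (finCongr hcard.symm)) ⟨u, h⟩ : Fin _) : ℕ)
          = ((eT ⟨Fin.castAdd k u, adj_lift G x k h⟩ : Fin _) : ℕ) := rfl
      rw [hidx, hcard]

/-- The natural embedding of `G` into `bigG G x k`, as a graph homomorphism. -/
def homBig (G : SimpleGraph (Fin N)) (x : Fin N) (k : ℕ) : G →g bigG G x k :=
  ⟨Fin.castAdd k, fun {a b} h => adj_lift G x k h⟩

lemma bigG_connected (G : SimpleGraph (Fin N)) (x : Fin N) (hG : G.Connected) (k : ℕ) :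
    (bigG G x k).Connected := by
  have hN : 0 < N := by
    obtain ⟨v⟩ := hG.nonempty
    exact v.pos
  have hreach : ∀ w : Fin (N + k),
      (bigG G x k).Reachable (Fin.castAdd k x) w := by
    have hstep : ∀ m : ℕ, N ≤ m → ∀ hm : m < N + k,
        (bigG G x k).Reachable (Fin.castAdd k x) ⟨m, hm⟩ := by
      intro m hm
      induction m, hm using Nat.le_induction with
      | base =>
        intro hm
        refine SimpleGraph.Adj.reachable ?_
        rw [bigG_adj_iff]
        exact ⟨Nat.ne_of_lt x.isLt, Or.inl (Or.inr (Or.inl ⟨rfl, rfl⟩))⟩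
      | succ n hn ih =>
        intro hm
        refine (ih (by omega)).trans (SimpleGraph.Adj.reachable ?_)
        rw [bigG_adj_iff]
        exact ⟨by simp, Or.inl (Or.inr (Or.inr ⟨hn, rfl⟩))⟩
    intro w
    by_cases hw : (w : ℕ) < N
    · have := SimpleGraph.Reachable.map (homBig G x k) (hG.preconnected x ⟨(w : ℕ), hw⟩)
      have hww : homBig G x k ⟨(w : ℕ), hw⟩ = w := Fin.ext rfl
      have hxx : homBig G x k x = Fin.castAdd k x := rfl
      rw [hww, hxx] at this
      exact this
    · have hw' : (w : ℕ) < N + k := w.isLt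
      have := hstep (w : ℕ) (Nat.not_lt.mp hw) hw'
      rwa [show (⟨(w : ℕ), hw'⟩ : Fin (N + k)) = w from Fin.ext rfl] at this
  rw [SimpleGraph.connected_iff]
  exact ⟨fun u v => (hreach u).symm.trans (hreach v), ⟨⟨0, by omega⟩⟩⟩

end NonLombardiFamily

/-- There exist infinitely many pairwise non-isomorphic connected graphs that
admit no Lombardi drawing.  (As in the paper, we assume as given the existence of a connected
non-Lombardi graph `G₈` having two non-adjacent degree-one vertices with no common neighbor.) -/
theorem infinitely_many_connected_non_lombardi
    (hG8 : ∃ (N : ℕ) (G : SimpleGraph (Fin N)), G.Connected ∧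
      (∃ x y : Fin N, x ≠ y ∧ ¬ G.Adj x y ∧
        Nat.card {w // G.Adj x w} = 1 ∧ Nat.card {w // G.Adj y w} = 1 ∧
        ∀ w, G.Adj x w → ¬ G.Adj y w) ∧
      ¬ HasLombardi (Fin N) G) :
    ∃ F : ℕ → Σ N : ℕ, SimpleGraph (Fin N),
      (∀ i, (F i).2.Connected ∧ ¬ HasLombardi (Fin (F i).1) (F i).2) ∧
      (∀ i j, i ≠ j → IsEmpty ((F i).2 ≃g (F j).2)) := by
  obtain ⟨N, G, hGconn, ⟨x, y, hxy, hnadj, hcx, hcy, hcommon⟩, hnl⟩ := hG8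
  refine ⟨fun i => ⟨N + i, bigG G x i⟩, ?_, ?_⟩
  · intro i
    exact ⟨bigG_connected G x hGconn i,
      fun hL => hnl (restrict_lombardi G x hcx i hL)⟩
  · intro i j hij
    constructor
    intro e
    have h2 : N + i = N + j := Fin.equiv_iff_eq.mp ⟨e.toEquiv⟩
    omega
end
end

section
/- Given a circle C and three points a, b, c on C, there exists a point p in the open disk bounded by C and three circular arcs joining p to a, to b, and to c, each arc meeting C perpendicularly at its endpoint on C, such that the three arcs meet at p at pairwise 120° angles. -/
open Set Metric

noncomputable section

namespace Piece

/-- The velocity (tangent) vector of a piece at parameter `t`. -/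
def tangent : Piece → ℝ → ℂ
  | arc c r θ₀ θ₁, t =>
      (r : ℂ) * ((θ₁ - θ₀ : ℝ) : ℂ) * Complex.I *
        Complex.exp (Complex.I * ((θ₀ + t * (θ₁ - θ₀) : ℝ) : ℂ))
  | seg p q, _ => q - p

/-- Starting point. -/
def source (P : Piece) : ℂ := P.toFun 0

/-- Ending point. -/
def target (P : Piece) : ℂ := P.toFun 1

/-- The trace of the piece in the plane. -/
def image (P : Piece) : Set ℂ := P.toFun '' Set.Icc 0 1

end Piece

/-- The unsigned angle in `[0, π]` between two vectors of the plane `ℂ`. -/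
def vecAngle (u v : ℂ) : ℝ := Real.arccos (((starRingEnd ℂ) u * v).re / (‖u‖ * ‖v‖))

/-- The angle in `[0, π/2]` between the two *lines* spanned by `u` and `v`. -/
def lineAngle (u v : ℂ) : ℝ := Real.arccos (|((starRingEnd ℂ) u * v).re| / (‖u‖ * ‖v‖))

/-!
After the homothety `z ↦ o + R z` the circle is the unit circle. For `p` in the unit disk the
disk automorphism `φ_p = blaschke p` sends `p` to `0` and has positive derivative there, so it
maps the geodesic from `p` to a point `x` of the circle (an arc of a circle orthogonal to the unit
circle, or a diameter) onto a radius: that geodesic leaves `p` in the direction of `φ_p x`. It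
therefore suffices to find `p` with `φ_p b = ω φ_p a` and `φ_p c = ω² φ_p a` for a primitive cube
root of unity `ω`. The candidate is the point sent to `0` by the Möbius map taking `a, b, c` to
`1, ω, ω²`; this map preserves the unit circle, and replacing `ω` by `ω̄` reflects the candidate
in the circle, so one of the two choices lies in the open disk.
-/

open Complex ComplexConjugate

namespace Piece

variable (c z w : ℂ) (r θ₀ θ₁ : ℝ)

@[simp] lemma source_arc : (arc c r θ₀ θ₁).source = c + r * exp (I * θ₀) := by
  simp [source, toFun]

@[simp] lemma target_arc : (arc c r θ₀ θ₁).target = c + r * exp (I * θ₁) := by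
  simp [target, toFun]

@[simp] lemma tangent_arc_zero :
    (arc c r θ₀ θ₁).tangent 0 = r * (θ₁ - θ₀) * I * exp (I * θ₀) := by
  simp [tangent]

@[simp] lemma tangent_arc_one :
    (arc c r θ₀ θ₁).tangent 1 = r * (θ₁ - θ₀) * I * exp (I * θ₁) := by
  simp [tangent]

@[simp] lemma source_seg : (seg z w).source = z := by simp [source, toFun]

@[simp] lemma target_seg : (seg z w).target = w := by simp [target, toFun]

@[simp] lemma tangent_seg (t : ℝ) : (seg z w).tangent t = w - z := rfl

def homothety (o : ℂ) (R : ℝ) : Piece → Piece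
  | arc c r θ₀ θ₁ => arc (o + R * c) (R * r) θ₀ θ₁
  | seg z w => seg (o + R * z) (o + R * w)

variable (o : ℂ) (R : ℝ) (P : Piece)

lemma toFun_homothety (t : ℝ) : (P.homothety o R).toFun t = o + R * P.toFun t := by
  cases P <;> simp only [homothety, toFun] <;> push_cast <;> ring

lemma source_homothety : (P.homothety o R).source = o + R * P.source :=
  toFun_homothety o R P 0

lemma target_homothety : (P.homothety o R).target = o + R * P.target :=
  toFun_homothety o R P 1

lemma tangent_homothety (t : ℝ) : (P.homothety o R).tangent t = R * P.tangent t := by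
  cases P <;> simp only [homothety, tangent] <;> push_cast <;> ring

lemma Nondeg.homothety {o : ℂ} {R : ℝ} {P : Piece} (hR : R ≠ 0) (hP : P.Nondeg) :
    (P.homothety o R).Nondeg := by
  cases P with
  | arc c r θ₀ θ₁ => exact ⟨mul_ne_zero hR hP.1, hP.2⟩
  | seg z w =>
    simp only [Piece.homothety, Nondeg, ne_eq, add_right_inj, mul_eq_mul_left_iff,
      ofReal_eq_zero, hR, or_false]
    exact hP

end Piece

lemma vecAngle_eq_angle (u v : ℂ) : vecAngle u v = InnerProductGeometry.angle u v := by
  simp only [vecAngle, InnerProductGeometry.angle, Complex.inner, mul_comm]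

lemma vecAngle_ofReal_mul {l₁ l₂ : ℝ} (h₁ : 0 < l₁) (h₂ : 0 < l₂) (u v : ℂ) :
    vecAngle (l₁ * u) (l₂ * v) = vecAngle u v := by
  simp only [vecAngle_eq_angle, ← real_smul, InnerProductGeometry.angle_smul_left_of_pos _ _ h₁,
    InnerProductGeometry.angle_smul_right_of_pos _ _ h₂]

lemma vecAngle_mul_self {u : ℂ} (hu : u ≠ 0) (z : ℂ) :
    vecAngle u (z * u) = Real.arccos (z.re / ‖z‖) := by
  have h := Complex.angle_mul_left hu 1 z
  rw [mul_one] at h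
  rw [vecAngle_eq_angle, mul_comm, h]
  simp [InnerProductGeometry.angle, Complex.inner]

lemma lineAngle_ofReal_mul_I_mul (s : ℝ) (z : ℂ) :
    lineAngle (s * z) (I * z) = Real.pi / 2 := by
  have : conj (s * z) * (I * z) = (s * normSq z : ℝ) * I := by
    push_cast
    rw [normSq_eq_conj_mul_self, map_mul, conj_ofReal]
    ring
  rw [lineAngle, this, re_ofReal_mul, I_re, mul_zero, abs_zero, zero_div, Real.arccos_zero]

section CubeRoot

variable {ω : ℂ} (hω : ω ^ 2 + ω + 1 = 0)
include hω

lemma norm_eq_one_of_sq_add_self_add_one : ‖ω‖ = 1 := by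
  have h3 : ω ^ 3 = 1 := by linear_combination (ω - 1) * hω
  have := congrArg norm h3
  rw [norm_pow, norm_one] at this
  exact (pow_eq_one_iff_of_nonneg (norm_nonneg _) (by norm_num)).mp this

lemma conj_eq_sq_of_sq_add_self_add_one : conj ω = ω ^ 2 := by
  rw [← inv_eq_conj (norm_eq_one_of_sq_add_self_add_one hω), inv_eq_of_mul_eq_one_right]
  linear_combination (ω - 1) * hω

lemma re_eq_neg_half_of_sq_add_self_add_one : ω.re = -(1 / 2) := by
  have h := congrArg re (conj_eq_sq_of_sq_add_self_add_one hω)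
  have h' := congrArg re hω
  simp only [conj_re, add_re, one_re, zero_re] at h h'
  linarith

lemma conj_ne_self_of_sq_add_self_add_one : conj ω ≠ ω := by
  intro h
  have h2 : ω ^ 2 = ω := by rw [← conj_eq_sq_of_sq_add_self_add_one hω, h]
  have h1 : ω = -(1 / 2) := by linear_combination (hω - h2) / 2
  norm_num [h1] at h2

lemma vecAngle_mul_of_sq_add_self_add_one {u : ℂ} (hu : u ≠ 0) {l₁ l₂ : ℝ}
    (h₁ : 0 < l₁) (h₂ : 0 < l₂) : vecAngle (l₁ * u) (l₂ * (ω * u)) = 2 * Real.pi / 3 := by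
  rw [vecAngle_ofReal_mul h₁ h₂, vecAngle_mul_self hu, norm_eq_one_of_sq_add_self_add_one hω,
    div_one, re_eq_neg_half_of_sq_add_self_add_one hω]
  refine Real.arccos_eq_of_eq_cos (by positivity) (by linarith [Real.pi_pos]) ?_
  rw [show 2 * Real.pi / 3 = Real.pi - Real.pi / 3 by ring, Real.cos_pi_sub,
    Real.cos_pi_div_three]

end CubeRoot

lemma exists_sq_add_self_add_one_eq_zero : ∃ ω : ℂ, ω ^ 2 + ω + 1 = 0 := by
  have h := (Complex.isPrimitiveRoot_exp 3 (by norm_num)).geom_sum_eq_zero (by norm_num)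
  rw [Finset.sum_range_succ, Finset.sum_range_succ, Finset.sum_range_one] at h
  exact ⟨_, by linear_combination h⟩

def blaschke (p z : ℂ) : ℂ := (z - p) / (1 - conj p * z)

lemma one_sub_conj_mul_ne_zero {p x : ℂ} (hp : ‖p‖ < 1) (hx : ‖x‖ = 1) :
    1 - conj p * x ≠ 0 := by
  rw [sub_ne_zero]
  intro h
  have := congrArg norm h
  rw [norm_mul, norm_conj, hx, mul_one, norm_one] at this
  linarith

lemma blaschke_ne_zero {p x : ℂ} (hp : ‖p‖ < 1) (hx : ‖x‖ = 1) : blaschke p x ≠ 0 := by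
  refine div_ne_zero (sub_ne_zero.mpr ?_) (one_sub_conj_mul_ne_zero hp hx)
  rintro rfl
  linarith

lemma blaschke_div_eq {N D N' D' x μ : ℂ} (hD : D ≠ 0) (hN' : N' ≠ 0)
    (hconj : conj (N / D) = D' / N') (hx : 1 - conj (N / D) * x ≠ 0)
    (h : x * D - N = -μ * (N' - D' * x)) : blaschke (N / D) x = -(N' / D) * μ := by
  rw [hconj] at hx
  have hx' : N' - D' * x ≠ 0 := by
    contrapose! hx
    field_simp
    linear_combination hx
  rw [blaschke, hconj, show x - N / D = (x * D - N) / D by field_simp,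
    show 1 - D' / N' * x = (N' - D' * x) / N' by field_simp, h]
  field_simp

section TripodCenter

variable (a b c : ℂ)

def tripodNum (ω : ℂ) : ℂ := b * (a - c) + ω * c * (a - b)

def tripodDen (ω : ℂ) : ℂ := (a - c) + ω * (a - b)

/-- The image of `ω` under the Möbius map sending `-1, 0, ∞` to `a, b, c`. For a primitive cube
root `ω`, it is the point that the Möbius map taking `a, b, c` to `1, ω, ω²` sends to `0`. -/
def tripodCenter (ω : ℂ) : ℂ := tripodNum a b c ω / tripodDen a b c ω

lemma tripodNum_mul_tripodDen_sub (ω ω' : ℂ) :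
    tripodNum a b c ω * tripodDen a b c ω' - tripodNum a b c ω' * tripodDen a b c ω =
      (ω - ω') * (a - b) * (a - c) * (c - b) := by
  simp only [tripodNum, tripodDen]
  ring

variable {a b c} (ha : ‖a‖ = 1) (hb : ‖b‖ = 1) (hc : ‖c‖ = 1)
include ha hb hc

lemma tripodNum_conj (ω : ℂ) :
    tripodNum a b c (conj ω) = -(a * b * c) * conj (tripodDen a b c ω) := by
  have ha0 : a ≠ 0 := ne_zero_of_norm_ne_zero (by simp [ha])
  have hb0 : b ≠ 0 := ne_zero_of_norm_ne_zero (by simp [hb])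
  have hc0 : c ≠ 0 := ne_zero_of_norm_ne_zero (by simp [hc])
  simp only [tripodNum, tripodDen, map_add, map_mul, map_sub, ← inv_eq_conj ha,
    ← inv_eq_conj hb, ← inv_eq_conj hc]
  field_simp
  ring

lemma tripodDen_conj (ω : ℂ) :
    tripodDen a b c (conj ω) = -(a * b * c) * conj (tripodNum a b c ω) := by
  have ha0 : a ≠ 0 := ne_zero_of_norm_ne_zero (by simp [ha])
  have hb0 : b ≠ 0 := ne_zero_of_norm_ne_zero (by simp [hb])
  have hc0 : c ≠ 0 := ne_zero_of_norm_ne_zero (by simp [hc])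
  simp only [tripodNum, tripodDen, map_add, map_mul, map_sub, ← inv_eq_conj ha,
    ← inv_eq_conj hb, ← inv_eq_conj hc]
  field_simp
  ring

end TripodCenter

section TripodRelations

variable {a b c ω : ℂ} (hω : ω ^ 2 + ω + 1 = 0)
include hω

lemma mul_tripodDen_sub_tripodNum_first : a * tripodDen a b c ω - tripodNum a b c ω =
    -ω * (tripodNum a b c (ω ^ 2) - tripodDen a b c (ω ^ 2) * a) := by
  simp only [tripodNum, tripodDen]
  linear_combination (-(a - b) * (a - c) * (ω - 1)) * hω

lemma mul_tripodDen_sub_tripodNum_second : b * tripodDen a b c ω - tripodNum a b c ω =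
    -ω ^ 2 * (tripodNum a b c (ω ^ 2) - tripodDen a b c (ω ^ 2) * b) := by
  simp only [tripodNum, tripodDen]
  linear_combination (-(a - b) * (b - c) * ω * (ω - 1)) * hω

omit hω in
lemma mul_tripodDen_sub_tripodNum_third : c * tripodDen a b c ω - tripodNum a b c ω =
    -1 * (tripodNum a b c (ω ^ 2) - tripodDen a b c (ω ^ 2) * c) := by
  simp only [tripodNum, tripodDen]
  ring

end TripodRelations

lemma norm_tripodCenter_lt_one {a b c ω : ℂ}
    (hlt : ‖tripodNum a b c ω‖ < ‖tripodDen a b c ω‖) :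
    ‖tripodCenter a b c ω‖ < 1 := by
  rw [tripodCenter, norm_div, div_lt_one ((norm_nonneg _).trans_lt hlt)]
  exact hlt

section UnitCircle

variable {a b c : ℂ} (ha : ‖a‖ = 1) (hb : ‖b‖ = 1) (hc : ‖c‖ = 1)
include ha hb hc

lemma norm_tripodNum_ne_norm_tripodDen (hab : a ≠ b) (hbc : b ≠ c) (hac : a ≠ c) {ω : ℂ}
    (hω : ω ^ 2 + ω + 1 = 0) : ‖tripodNum a b c ω‖ ≠ ‖tripodDen a b c ω‖ := by
  intro h
  have hsq : tripodNum a b c ω * conj (tripodNum a b c ω) =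
      tripodDen a b c ω * conj (tripodDen a b c ω) := by
    rw [mul_conj, mul_conj, normSq_eq_norm_sq, normSq_eq_norm_sq, h]
  have hdet := tripodNum_mul_tripodDen_sub a b c ω (conj ω)
  rw [tripodNum_conj ha hb hc, tripodDen_conj ha hb hc] at hdet
  have hzero : (ω - conj ω) * (a - b) * (a - c) * (c - b) = 0 := by
    linear_combination -hdet - (a * b * c) * hsq
  simp only [mul_eq_zero, sub_eq_zero] at hzero
  rcases hzero with ((h | h) | h) | h
  · exact conj_ne_self_of_sq_add_self_add_one hω h.symm
  · exact hab h
  · exact hac h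
  · exact hbc h.symm

lemma exists_norm_tripodNum_lt (hab : a ≠ b) (hbc : b ≠ c) (hac : a ≠ c) :
    ∃ ω : ℂ, ω ^ 2 + ω + 1 = 0 ∧ ‖tripodNum a b c ω‖ < ‖tripodDen a b c ω‖ := by
  obtain ⟨ω, hω⟩ := exists_sq_add_self_add_one_eq_zero
  rcases (norm_tripodNum_ne_norm_tripodDen ha hb hc hab hbc hac hω).lt_or_gt with h | h
  · exact ⟨ω, hω, h⟩
  · refine ⟨conj ω, by simpa using congrArg conj hω, ?_⟩
    simpa [tripodNum_conj ha hb hc, tripodDen_conj ha hb hc, ha, hb, hc] using h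

lemma conj_tripodCenter (ω : ℂ) :
    conj (tripodCenter a b c ω) = tripodDen a b c (conj ω) / tripodNum a b c (conj ω) := by
  have habc : a * b * c ≠ 0 := ne_zero_of_norm_ne_zero (by simp [ha, hb, hc])
  rw [tripodNum_conj ha hb hc, tripodDen_conj ha hb hc, tripodCenter, map_div₀,
    mul_div_mul_left _ _ (neg_ne_zero.mpr habc)]

lemma blaschke_tripodCenter {ω : ℂ} (hω : ω ^ 2 + ω + 1 = 0)
    (hlt : ‖tripodNum a b c ω‖ < ‖tripodDen a b c ω‖) :
    blaschke (tripodCenter a b c ω) b = ω * blaschke (tripodCenter a b c ω) a ∧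
      blaschke (tripodCenter a b c ω) c = ω ^ 2 * blaschke (tripodCenter a b c ω) a := by
  have hD : tripodDen a b c ω ≠ 0 := norm_pos_iff.mp ((norm_nonneg _).trans_lt hlt)
  have hp := norm_tripodCenter_lt_one hlt
  have hN' : tripodNum a b c (conj ω) ≠ 0 := by
    rw [tripodNum_conj ha hb hc]
    exact mul_ne_zero (neg_ne_zero.mpr (ne_zero_of_norm_ne_zero (by simp [ha, hb, hc])))
      ((map_ne_zero _).mpr hD)
  have key : ∀ {x μ : ℂ}, ‖x‖ = 1 →
      x * tripodDen a b c ω - tripodNum a b c ω =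
        -μ * (tripodNum a b c (ω ^ 2) - tripodDen a b c (ω ^ 2) * x) →
      blaschke (tripodCenter a b c ω) x = -(tripodNum a b c (conj ω) / tripodDen a b c ω) * μ := by
    intro x μ hx h
    rw [← conj_eq_sq_of_sq_add_self_add_one hω] at h
    exact blaschke_div_eq hD hN' (conj_tripodCenter ha hb hc ω)
      (one_sub_conj_mul_ne_zero hp hx) h
  rw [key ha (mul_tripodDen_sub_tripodNum_first hω), key hb (mul_tripodDen_sub_tripodNum_second hω),
    key hc mul_tripodDen_sub_tripodNum_third]
  constructor
  · ring
  · linear_combination (tripodNum a b c (conj ω) / tripodDen a b c ω) * (ω - 1) * hω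

lemma exists_blaschke_equilateral (hab : a ≠ b) (hbc : b ≠ c) (hac : a ≠ c) :
    ∃ p ω : ℂ, ‖p‖ < 1 ∧ ω ^ 2 + ω + 1 = 0 ∧
      blaschke p b = ω * blaschke p a ∧ blaschke p c = ω ^ 2 * blaschke p a := by
  obtain ⟨ω, hω, hlt⟩ := exists_norm_tripodNum_lt ha hb hc hab hbc hac
  exact ⟨tripodCenter a b c ω, ω, norm_tripodCenter_lt_one hlt, hω,
    blaschke_tripodCenter ha hb hc hω hlt⟩

end UnitCircle

lemma arg_div_im_pos {w : ℂ} (h : w.im ≠ 0) : 0 < arg w / w.im := by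
  have harg : arg w ≠ 0 := fun h' => h (arg_eq_zero_iff.mp h').2
  rcases h.lt_or_gt with him | him
  · exact div_pos_of_neg_of_neg (arg_neg_iff.mpr him) him
  · exact div_pos ((arg_nonneg_iff.mpr him.le).lt_of_ne' harg) him

lemma exp_I_mul_arg {z : ℂ} (hz : z ≠ 0) : exp (I * arg z) = z / ‖z‖ := by
  rw [eq_div_iff (ofReal_ne_zero.mpr (norm_ne_zero_iff.mpr hz)), mul_comm, mul_comm I]
  exact norm_mul_exp_arg_mul_I z

section Geodesic

variable {p x : ℂ} (hp : ‖p‖ < 1) (hx : ‖x‖ = 1)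
include hp hx

lemma exists_seg_geodesic (hw : (1 - conj p * x).im = 0) :
    ∃ P : Piece, P.Nondeg ∧ P.source = p ∧ P.target = x ∧ (∃ s : ℝ, P.tangent 1 = s * x) ∧
      ∃ l : ℝ, 0 < l ∧ P.tangent 0 = l * blaschke p x := by
  set μ := (conj p * x).re
  have hμ : conj p * x = μ := ext rfl (by simp at hw ⊢; linarith)
  have hxx : x * conj x = 1 := by rw [mul_conj, normSq_eq_norm_sq, hx]; norm_num
  have hpx : p = μ * x := by
    have := congrArg conj hμ
    rw [map_mul, conj_conj, conj_ofReal] at this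
    linear_combination x * this - p * hxx
  have hμ1 : μ < 1 := by
    calc μ ≤ ‖conj p * x‖ := re_le_norm _
      _ = ‖p‖ := by rw [norm_mul, norm_conj, hx, mul_one]
      _ < 1 := hp
  have hne : p ≠ x := by rintro rfl; linarith
  refine ⟨.seg p x, hne, by simp, by simp, ⟨1 - μ, ?_⟩, 1 - μ, by linarith, ?_⟩
  · simp only [Piece.tangent_seg, hpx]
    push_cast
    ring
  · have : (1 : ℂ) - μ ≠ 0 := by exact_mod_cast (sub_pos.mpr hμ1).ne'
    rw [Piece.tangent_seg, blaschke, hμ]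
    push_cast
    field_simp

/-- The circle with centre `x + t I x` and radius `|t|` meets the unit circle orthogonally at `x`;
`t` is chosen so that it passes through `p`, and the arc from `p` to `x` sweeps the angle
`2 arg (1 - p̄ x)`, whose sign is that of `t`. -/
lemma exists_arc_geodesic (hw : (1 - conj p * x).im ≠ 0) :
    ∃ P : Piece, P.Nondeg ∧ P.source = p ∧ P.target = x ∧ (∃ s : ℝ, P.tangent 1 = s * x) ∧
      ∃ l : ℝ, 0 < l ∧ P.tangent 0 = l * blaschke p x := by
  set w := 1 - conj p * x with hw_def
  set t : ℝ := ‖x - p‖ ^ 2 / (2 * w.im)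
  set θ₁ : ℝ := arg (-I * x)
  set θ₀ : ℝ := θ₁ - 2 * arg w
  have hw0 : w ≠ 0 := fun h => hw (by rw [h, zero_im])
  have hx0 : x ≠ 0 := ne_zero_of_norm_ne_zero (by simp [hx])
  have hxp : x - p ≠ 0 := sub_ne_zero.mpr (by rintro rfl; linarith)
  have hxx : conj x = x⁻¹ := (inv_eq_conj hx).symm
  have e₁ : exp (I * θ₁) = -I * x := by
    rw [exp_I_mul_arg (by simp [hx0]), norm_mul, norm_neg, norm_I, hx]
    simp
  have e₀ : exp (I * θ₀) = -I * blaschke p x := by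
    have hn : ((‖w‖ : ℂ)) ^ 2 = w * conj w := by rw [mul_conj, normSq_eq_norm_sq]; push_cast; ring
    rw [show I * (θ₀ : ℂ) = I * θ₁ - ((2 : ℕ) : ℂ) * (I * arg w) by
        simp only [θ₀]; push_cast; ring,
      exp_sub, exp_nat_mul, e₁, exp_I_mul_arg hw0, div_pow, hn, blaschke, hw_def]
    simp only [map_sub, map_one, map_mul, conj_conj, hxx]
    field_simp
  have hxx' : x * conj x = 1 := by rw [hxx, mul_inv_cancel₀ hx0]
  have hww : w * w⁻¹ = 1 := mul_inv_cancel₀ hw0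
  have htw : (t : ℂ) * (p * conj x - conj p * x) = I * ((x - p) * (conj x - conj p)) := by
    have h2 : (2 * w.im : ℝ) * I = p * conj x - conj p * x := by
      rw [← sub_conj, hw_def]
      simp only [map_sub, map_one, map_mul, conj_conj]
      ring
    have h3 : (t : ℂ) * ((2 * w.im : ℝ) : ℂ) = ‖x - p‖ ^ 2 := by
      rw [← ofReal_mul]
      simp only [t]
      rw [div_mul_cancel₀ _ (by simpa using hw)]
      push_cast
      rfl
    rw [← h2, ← mul_assoc, h3, ← map_sub, mul_conj, normSq_eq_norm_sq]
    push_cast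
    ring
  have hθ : (θ₁ : ℂ) - θ₀ = 2 * arg w := by simp only [θ₀]; push_cast; ring
  have hl : 0 < 2 * t * arg w := by
    have : 2 * t * arg w = ‖x - p‖ ^ 2 * (arg w / w.im) := by
      simp only [t]
      field_simp
    rw [this]
    exact mul_pos (pow_pos (norm_pos_iff.mpr hxp) 2) (arg_div_im_pos hw)
  refine ⟨.arc (x + t * I * x) t θ₀ θ₁, ⟨?_, ?_⟩, ?_, ?_, ⟨2 * t * arg w, ?_⟩, 2 * t * arg w, hl,
    ?_⟩
  · intro h
    rw [h] at hl
    simp at hl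
  · intro h
    rw [h, sub_self] at hθ
    simp at hθ
    simp [hθ] at hl
  · -- `x * w - (x - p) = x * (w - conj w)` and `t * (w - conj w) = I * ‖x - p‖ ^ 2`
    rw [Piece.source_arc, e₀, blaschke, ← hw_def, div_eq_mul_inv]
    linear_combination (I * x * w⁻¹) * htw + (-(t * I * p * w⁻¹) - (x - p) * w⁻¹) * hxx'
      + (-(x - p) - t * I * x) * hww + (x * w⁻¹ * (x - p) * (conj x - conj p)) * I_sq
  · rw [Piece.target_arc, e₁]
    ring
  · rw [Piece.tangent_arc_one, e₁, hθ]
    push_cast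
    linear_combination (-(2 * t * arg w) * x) * I_sq
  · rw [Piece.tangent_arc_zero, e₀, hθ]
    push_cast
    linear_combination (-(2 * t * arg w) * blaschke p x) * I_sq

lemma exists_geodesic_piece :
    ∃ P : Piece, P.Nondeg ∧ P.source = p ∧ P.target = x ∧ (∃ s : ℝ, P.tangent 1 = s * x) ∧
      ∃ l : ℝ, 0 < l ∧ P.tangent 0 = l * blaschke p x := by
  by_cases hw : (1 - conj p * x).im = 0
  · exact exists_seg_geodesic hp hx hw
  · exact exists_arc_geodesic hp hx hw

end Geodesic

lemma norm_sub_div_eq_one {x o : ℂ} {R : ℝ} (hR : 0 < R) (hx : dist x o = R) :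
    ‖(x - o) / R‖ = 1 := by
  rw [norm_div, ← dist_eq, hx, norm_real, Real.norm_of_nonneg hR.le, div_self hR.ne']

lemma exists_perpendicular_piece {o x p : ℂ} {R : ℝ} (hR : 0 < R) (hx : dist x o = R)
    (hp : ‖p‖ < 1) :
    ∃ P : Piece, P.Nondeg ∧ P.source = o + R * p ∧ P.target = x ∧
      lineAngle (P.tangent 1) (I * (x - o)) = Real.pi / 2 ∧
      ∃ l : ℝ, 0 < l ∧ P.tangent 0 = l * blaschke p ((x - o) / R) := by
  obtain ⟨P, hP, hsrc, htgt, ⟨s, hs⟩, l, hl, ht⟩ :=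
    exists_geodesic_piece hp (norm_sub_div_eq_one hR hx)
  have hR0 : (R : ℂ) ≠ 0 := ofReal_ne_zero.mpr hR.ne'
  refine ⟨P.homothety o R, hP.homothety hR.ne', by rw [P.source_homothety, hsrc], ?_, ?_,
    R * l, mul_pos hR hl, ?_⟩
  · rw [P.target_homothety, htgt]
    field_simp
    ring
  · rw [P.tangent_homothety, hs, show (R : ℂ) * (s * ((x - o) / R)) = s * (x - o) by field_simp]
    exact lineAngle_ofReal_mul_I_mul s _
  · rw [P.tangent_homothety, ht]
    push_cast
    ring

open Real in
/-- Given a circle `C` (center `o`, radius `R`) and three (distinct) points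
`a, b, c` on it, there exists a point `p` in the open disk bounded by `C` together with three
circular arcs (or segments) joining `p` to `a`, `b` and `c`, each meeting `C` perpendicularly
at its endpoint on `C`, such that the three arcs meet at `p` at pairwise `120°` angles. -/
theorem exists_perpendicular_tripod
    (o : ℂ) (R : ℝ) (hR : 0 < R) (a b c : ℂ)
    (ha : dist a o = R) (hb : dist b o = R) (hc : dist c o = R)
    (hab : a ≠ b) (hbc : b ≠ c) (hac : a ≠ c) :
    ∃ p : ℂ, dist p o < R ∧
      ∃ Pa Pb Pc : Piece,
        Pa.Nondeg ∧ Pb.Nondeg ∧ Pc.Nondeg ∧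
        Pa.source = p ∧ Pa.target = a ∧
        Pb.source = p ∧ Pb.target = b ∧
        Pc.source = p ∧ Pc.target = c ∧
        lineAngle (Pa.tangent 1) (Complex.I * (a - o)) = π / 2 ∧
        lineAngle (Pb.tangent 1) (Complex.I * (b - o)) = π / 2 ∧
        lineAngle (Pc.tangent 1) (Complex.I * (c - o)) = π / 2 ∧
        vecAngle (Pa.tangent 0) (Pb.tangent 0) = 2 * π / 3 ∧
        vecAngle (Pb.tangent 0) (Pc.tangent 0) = 2 * π / 3 ∧
        vecAngle (Pa.tangent 0) (Pc.tangent 0) = 2 * π / 3 := by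
  have hR0 : (R : ℂ) ≠ 0 := ofReal_ne_zero.mpr hR.ne'
  have hnorm {x y : ℂ} (h : x ≠ y) : (x - o) / R ≠ (y - o) / R := by
    rwa [Ne, div_left_inj' hR0, sub_left_inj]
  obtain ⟨p, ω, hp, hω, hb', hc'⟩ := exists_blaschke_equilateral (norm_sub_div_eq_one hR ha)
    (norm_sub_div_eq_one hR hb) (norm_sub_div_eq_one hR hc) (hnorm hab) (hnorm hbc) (hnorm hac)
  obtain ⟨Pa, hPa, hsa, hta, hpa, la, hla, hga⟩ := exists_perpendicular_piece hR ha hp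
  obtain ⟨Pb, hPb, hsb, htb, hpb, lb, hlb, hgb⟩ := exists_perpendicular_piece hR hb hp
  obtain ⟨Pc, hPc, hsc, htc, hpc, lc, hlc, hgc⟩ := exists_perpendicular_piece hR hc hp
  have hga0 := blaschke_ne_zero hp (norm_sub_div_eq_one hR ha)
  have hω0 : ω ≠ 0 := by rintro rfl; norm_num at hω
  refine ⟨o + R * p, ?_, Pa, Pb, Pc, hPa, hPb, hPc, hsa, hta, hsb, htb, hsc, htc, hpa, hpb, hpc,
    ?_, ?_, ?_⟩
  · rw [Complex.dist_eq, add_sub_cancel_left, norm_mul, norm_real, Real.norm_of_nonneg hR.le]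
    exact mul_lt_of_lt_one_right hR hp
  · rw [hga, hgb, hb']
    exact vecAngle_mul_of_sq_add_self_add_one hω hga0 hla hlb
  · rw [hgb, hgc, hb', hc', pow_two, mul_assoc]
    exact vecAngle_mul_of_sq_add_self_add_one hω (mul_ne_zero hω0 hga0) hlb hlc
  · rw [hga, hgc, hc']
    exact vecAngle_mul_of_sq_add_self_add_one (by linear_combination (ω ^ 2 - ω + 1) * hω) hga0
      hla hlc
end
end
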